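/- In the betweenness centrality game, a network g is an APSN if and only if g has at most one connected component with at least two vertices (all other vertices being isolated), and this component C — if it exists — satisfies: every vertex of C has degree at least 2; C has diameter exactly 2; and for all distinct i, j ∈ C, ij ∈ E(g) if and only if neither N_g(i)∖{j} ⊆ N_g(j)∖{i} nor N_g(j)∖{i} ⊆ N_g(i)∖{j} (i.e., ij is an edge exactly when neither of i, j dominates the other in the vicinal preorder). -/

import Mathlib

open SimpleGraph

/-- Degree of vertex `i` in network `g`. -/
noncomputable def deg {V : Type*} (g : SimpleGraph V) (i : V) : ℕ :=
  Nat.card (g.neighborSet i)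

/-- The network `g` with the (missing) edge `ij` added. -/
def addE {V : Type*} (g : SimpleGraph V) (i j : V) : SimpleGraph V :=
  g ⊔ SimpleGraph.fromEdgeSet {s(i, j)}

/-- The network `g` with the edge `ij` removed. -/
def delE {V : Type*} (g : SimpleGraph V) (i j : V) : SimpleGraph V :=
  g.deleteEdges {s(i, j)}

/-- Utility of agent `i` in the game with centralities `C` and edge cost `c`. -/
noncomputable def util {V : Type*} (C : V → SimpleGraph V → ℝ) (c : ℝ) (i : V)
    (g : SimpleGraph V) : ℝ :=
  C i g - c * (deg g i)

/-- Adding the missing edge `ij` is an improving move. -/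
def ImprovingAdd {V : Type*} (C : V → SimpleGraph V → ℝ) (c : ℝ) (g : SimpleGraph V)
    (i j : V) : Prop :=
  util C c i (addE g i j) ≥ util C c i g ∧ util C c j (addE g i j) ≥ util C c j g ∧
    (util C c i (addE g i j) > util C c i g ∨ util C c j (addE g i j) > util C c j g)

/-- Deleting the edge `ij` is an improving move. -/
def ImprovingDel {V : Type*} (C : V → SimpleGraph V → ℝ) (c : ℝ) (g : SimpleGraph V)
    (i j : V) : Prop :=
  util C c i (delE g i j) > util C c i g ∨ util C c j (delE g i j) > util C c j g

/-- `g` is pairwise stable at edge cost `c`. -/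
def PairwiseStable {V : Type*} (C : V → SimpleGraph V → ℝ) (c : ℝ) (g : SimpleGraph V) : Prop :=
  (∀ i j : V, i ≠ j → ¬ g.Adj i j → ¬ ImprovingAdd C c g i j) ∧
  (∀ i j : V, g.Adj i j → ¬ ImprovingDel C c g i j)

/-- `g` is asymptotically pairwise stable. -/
def APSN {V : Type*} (C : V → SimpleGraph V → ℝ) (g : SimpleGraph V) : Prop :=
  ∃ ε₀ : ℝ, 0 < ε₀ ∧ ∀ c : ℝ, 0 < c → c < ε₀ → PairwiseStable C c g

/-- Axiom 1: the centrality of agent `i` is increasing. -/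
def Axiom1 {V : Type*} (C : V → SimpleGraph V → ℝ) (i : V) : Prop :=
  ∀ (g : SimpleGraph V) (j : V), j ≠ i → ¬ g.Adj i j → C i (addE g i j) > C i g

/-- Axiom 1′: the centrality of agent `i` is decreasing. -/
def Axiom1' {V : Type*} (C : V → SimpleGraph V → ℝ) (i : V) : Prop :=
  ∀ (g : SimpleGraph V) (j : V), j ≠ i → ¬ g.Adj i j → C i (addE g i j) < C i g

/-- Axiom 2: the centrality of agent `i` is componentwise. -/
def Axiom2 {V : Type*} (C : V → SimpleGraph V → ℝ) (i : V) : Prop :=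
  ∀ (g : SimpleGraph V) (j : V), j ≠ i → ¬ g.Adj i j →
    ((g.Reachable i j → C i (addE g i j) > C i g) ∧
     (¬ g.Reachable i j → C i (addE g i j) ≤ C i g))

/-- Axiom 2′: the centrality of agent `i` is peripheral. -/
def Axiom2' {V : Type*} (C : V → SimpleGraph V → ℝ) (i : V) : Prop :=
  ∀ (g : SimpleGraph V) (j : V), j ≠ i → ¬ g.Adj i j →
    ((g.Reachable i j → C i (addE g i j) ≤ C i g) ∧
     (¬ g.Reachable i j → C i (addE g i j) > C i g))

/-- The centrality of agent `i` is degree homophilic with (strictly increasing) `f`. -/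
def DegreeHomophilic {V : Type*} (C : V → SimpleGraph V → ℝ) (i : V) (f : ℕ → ℤ) : Prop :=
  ∀ (g : SimpleGraph V) (j : V), j ≠ i → ¬ g.Adj i j →
    (C i (addE g i j) > C i g ↔ (deg g j : ℤ) ≤ f (deg g i))

/-- The number of shortest paths between `y` and `z` in `g`
(`0` if `y` and `z` are in different components). -/
noncomputable def sigmaAll {V : Type*} (g : SimpleGraph V) (y z : V) : ℕ :=
  Nat.card {p : g.Path y z // p.1.length = g.dist y z}

/-- The number of shortest paths between `y` and `z` in `g` passing through `i`. -/
noncomputable def sigmaThr {V : Type*} (g : SimpleGraph V) (y z i : V) : ℕ :=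
  Nat.card {p : g.Path y z // p.1.length = g.dist y z ∧ i ∈ p.1.support}

open scoped Classical in
/-- Betweenness centrality of `i` in `g`: the sum over unordered pairs `{y,z} ⊆ V∖{i}`
of `σ_yz(i)/σ_yz(g)` (summands with `σ_yz(g) = 0` vanish, since `x/0 = 0` in `ℝ`). -/
noncomputable def btw {V : Type*} [Fintype V] (g : SimpleGraph V) (i : V) : ℝ :=
  (1 / 2) * ∑ y : V, ∑ z : V,
    if y ≠ z ∧ y ≠ i ∧ z ≠ i then (sigmaThr g y z i : ℝ) / (sigmaAll g y z : ℝ) else 0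

/-!
For small edge costs only the sign of a change in betweenness matters: a missing link `ij` is
added iff it strictly raises the betweenness of both `i` and `j`, and a link survives iff
deleting it strictly lowers the betweenness of each endpoint (`apsn_iff`).

Adding `ij` never lowers a pair-dependency `σ_yz(i) / σ_yz` of its endpoint `i`, because every
new shortest path runs through `i`. The gain is strict when `ij` bridges two components, or when
some neighbour `k` of `i` is at distance 2 from `j`, since `i` then becomes a middle vertex of a
`j`–`k` geodesic. Hence a stable network has a single nontrivial component, of diameter at most
2, in which mutually non-dominated vertices are adjacent. A vertex of degree one, or a component
of diameter one, has betweenness zero, so its links would be dropped. Conversely, in a component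
of diameter 2 the link `ij` lies on no geodesic between other vertices when
`N(i) \ {j} ⊆ N(j) \ {i}`, so it does not change the betweenness of `i`: dominated links are
neither added nor kept. Finally, witnesses `k ∈ N(i) \ N[j]` and `k' ∈ N(j) \ N[i]` make `i` lose
part of its share of the `j`–`k` geodesics when `ij` is deleted.
-/

namespace SimpleGraph

variable {V : Type*} {g : SimpleGraph V} {u v w : V}

lemma dist_eq_two_iff : g.dist u v = 2 ↔ u ≠ v ∧ ¬ g.Adj u v ∧ ∃ w, g.Adj u w ∧ g.Adj w v := by
  rw [dist, ENat.toNat_eq_iff two_ne_zero, Nat.cast_ofNat, edist_eq_two_iff]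
  simp [Set.Nonempty, mem_commonNeighbors, adj_comm _ v]

lemma exists_adj_dist_eq_of_dist_eq_add_one {n : ℕ} (h : g.dist u v = n + 1) :
    ∃ w, g.Adj u w ∧ g.dist w v = n := by
  obtain ⟨p, hp⟩ := exists_walk_of_dist_ne_zero (by omega : g.dist u v ≠ 0)
  cases p with
  | nil => simp at h
  | @cons _ w _ hadj q =>
    refine ⟨w, hadj, le_antisymm ?_ ?_⟩
    · have := dist_le q
      simp only [Walk.length_cons] at hp
      omega
    · have := hadj.diff_dist_adj (u := v)
      rw [dist_comm (u := v) (v := w), dist_comm (u := v) (v := u)] at this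
      omega

lemma exists_dist_eq_three (h : 3 ≤ g.dist u v) : ∃ a b, g.dist a b = 3 := by
  obtain ⟨d, hd⟩ : ∃ d, g.dist u v = d + 3 := ⟨g.dist u v - 3, by omega⟩
  induction d generalizing u with
  | zero => exact ⟨u, v, hd⟩
  | succ d ih =>
    obtain ⟨w, -, hw⟩ := exists_adj_dist_eq_of_dist_eq_add_one (show g.dist u v = d + 3 + 1 by omega)
    exact ih (by omega) hw

namespace Walk

lemma exists_eq_cons_cons_nil (p : g.Walk u v) (h : p.length = 2) :
    ∃ w, ∃ (h₁ : g.Adj u w) (h₂ : g.Adj w v), p = .cons h₁ (.cons h₂ .nil) := by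
  match p, h with
  | .cons h₁ (.cons h₂ .nil), _ => exact ⟨_, h₁, h₂, rfl⟩

lemma notMem_support_of_length_le_one (p : g.Walk u v) (h : p.length ≤ 1) (hu : w ≠ u)
    (hv : w ≠ v) : w ∉ p.support := by
  match p, h with
  | .nil, _ => simpa using hu
  | .cons _ .nil, _ => simp [hu, hv]

lemma IsPath.exists_ne_adj_adj {p : g.Walk u v} (hp : p.IsPath) (hw : w ∈ p.support)
    (hu : w ≠ u) (hv : w ≠ v) : ∃ a b, a ≠ b ∧ g.Adj w a ∧ g.Adj w b := by
  induction p with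
  | nil => simp_all
  | @cons u x t hux q ih =>
    rw [support_cons, List.mem_cons] at hw
    rcases hw.resolve_left hu with hw
    by_cases hwx : w = x
    · subst hwx
      cases q with
      | nil => exact absurd rfl hv
      | @cons _ b _ hwb q' =>
        refine ⟨u, b, fun hub => ?_, hux.symm, hwb⟩
        rw [cons_isPath_iff, hub, support_cons] at hp
        exact hp.2 (List.mem_cons_of_mem _ q'.start_mem_support)
    · exact ih hp.of_cons hw hwx hv

end Walk

end SimpleGraph

section EdgeUpdates

variable {V : Type*} {g : SimpleGraph V} {i j : V}

lemma addE_adj_iff {a b : V} :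
    (addE g i j).Adj a b ↔ g.Adj a b ∨ (s(a, b) = s(i, j) ∧ a ≠ b) := by
  simp [addE, SimpleGraph.fromEdgeSet_adj]

lemma le_addE : g ≤ addE g i j := le_sup_left

lemma addE_adj (hij : i ≠ j) : (addE g i j).Adj i j := addE_adj_iff.2 (Or.inr ⟨rfl, hij⟩)

lemma addE_comm : addE g i j = addE g j i := by
  simp [addE, Sym2.eq_swap]

lemma delE_adj_iff {a b : V} : (delE g i j).Adj a b ↔ g.Adj a b ∧ s(a, b) ≠ s(i, j) := by
  simp [delE, SimpleGraph.deleteEdges_adj]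

lemma delE_le : delE g i j ≤ g := SimpleGraph.deleteEdges_le _

lemma delE_comm : delE g i j = delE g j i := by
  simp [delE, Sym2.eq_swap]

lemma not_delE_adj : ¬ (delE g i j).Adj i j := by
  simp [delE_adj_iff]

lemma addE_delE (h : g.Adj i j) : addE (delE g i j) i j = g := by
  ext a b
  rw [addE_adj_iff, delE_adj_iff]
  by_cases hab : s(a, b) = s(i, j)
  · rw [Sym2.eq_iff] at hab
    rcases hab with ⟨rfl, rfl⟩ | ⟨rfl, rfl⟩ <;> simp [h, h.symm, h.ne, h.ne']
  · simp [hab]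

lemma delE_addE (h : ¬ g.Adj i j) : delE (addE g i j) i j = g := by
  ext a b
  rw [delE_adj_iff, addE_adj_iff]
  by_cases hab : s(a, b) = s(i, j)
  · rw [Sym2.eq_iff] at hab
    rcases hab with ⟨rfl, rfl⟩ | ⟨rfl, rfl⟩ <;> simp_all [SimpleGraph.adj_comm]
  · simp [hab]

lemma neighborSet_addE (hij : i ≠ j) :
    (addE g i j).neighborSet i = insert j (g.neighborSet i) := by
  ext a
  rcases eq_or_ne a j with rfl | ha <;> simp [addE_adj_iff, *]

lemma deg_addE_left [Finite V] (hij : i ≠ j) (hna : ¬ g.Adj i j) :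
    deg (addE g i j) i = deg g i + 1 := by
  rw [deg, deg, Nat.card_coe_set_eq, Nat.card_coe_set_eq, neighborSet_addE hij,
    Set.ncard_insert_of_notMem (show j ∉ g.neighborSet i from hna) (Set.toFinite _)]

lemma deg_addE_right [Finite V] (hij : i ≠ j) (hna : ¬ g.Adj i j) :
    deg (addE g i j) j = deg g j + 1 := by
  rw [addE_comm, deg_addE_left hij.symm (mt Adj.symm hna)]

lemma deg_delE_left [Finite V] (h : g.Adj i j) : deg (delE g i j) i + 1 = deg g i := by
  rw [← deg_addE_left h.ne not_delE_adj, addE_delE h]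

lemma deg_delE_right [Finite V] (h : g.Adj i j) : deg (delE g i j) j + 1 = deg g j := by
  rw [delE_comm, deg_delE_left h.symm]

lemma neighborSet_diff_subset_iff :
    g.neighborSet i \ {j} ⊆ g.neighborSet j \ {i} ↔ ∀ k, g.Adj i k → k ≠ j → g.Adj j k :=
  ⟨fun h _ hik hkj => (h ⟨hik, hkj⟩).1, fun h _ hk => ⟨h _ hk.1 hk.2, hk.1.ne'⟩⟩

end EdgeUpdates

section Stability

variable {V : Type*} (C : V → SimpleGraph V → ℝ) (g : SimpleGraph V)

def LimitAddStable : Prop :=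
  ∀ i j, i ≠ j → ¬ g.Adj i j → ¬ (C i g < C i (addE g i j) ∧ C j g < C j (addE g i j))

def LimitDelStable : Prop :=
  ∀ i j, g.Adj i j → C i (delE g i j) < C i g

variable {C g}

lemma exists_pos_forall_le {α : Type*} [Finite α] {P : α → Prop} {f : α → ℝ}
    (hf : ∀ a, P a → 0 < f a) : ∃ ε, 0 < ε ∧ ∀ a, P a → ε ≤ f a := by
  by_cases hP : ∃ a, P a
  · obtain ⟨a₀, ha₀, hmin⟩ := Set.exists_min_image {a | P a} f (Set.toFinite _) hP
    exact ⟨f a₀, hf a₀ ha₀, hmin⟩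
  · exact ⟨1, one_pos, fun a ha => (hP ⟨a, ha⟩).elim⟩

lemma apsn_iff [Finite V] : APSN C g ↔ LimitAddStable C g ∧ LimitDelStable C g := by
  constructor
  · rintro ⟨ε₀, hε₀, hstable⟩
    refine ⟨fun i j hij hna ⟨hi, hj⟩ => ?_, fun i j hadj => ?_⟩
    · set m := min (C i (addE g i j) - C i g) (C j (addE g i j) - C j g)
      have hm : 0 < m := lt_min (sub_pos.2 hi) (sub_pos.2 hj)
      have hmε : 0 < min ε₀ m := lt_min hε₀ hm
      have := min_le_left ε₀ m
      have := min_le_right ε₀ m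
      have := min_le_left (C i (addE g i j) - C i g) (C j (addE g i j) - C j g)
      have := min_le_right (C i (addE g i j) - C i g) (C j (addE g i j) - C j g)
      apply (hstable (min ε₀ m / 2) (by linarith) (by linarith)).1 i j hij hna
      simp only [ImprovingAdd, util, deg_addE_left hij hna, deg_addE_right hij hna]
      push_cast
      exact ⟨by linarith, by linarith, Or.inl (by linarith)⟩
    · have := (hstable (ε₀ / 2) (by linarith) (by linarith)).2 i j hadj
      simp only [ImprovingDel, util, not_or, not_lt, ← deg_delE_left hadj] at this
      push_cast at this
      linarith [this.1]
  · rintro ⟨hadd, hdel⟩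
    obtain ⟨ε₀, hε₀, hloss⟩ := exists_pos_forall_le (P := fun p : V × V => g.Adj p.1 p.2)
      (f := fun p => C p.1 g - C p.1 (delE g p.1 p.2)) (fun p hp => sub_pos.2 (hdel _ _ hp))
    refine ⟨ε₀, hε₀, fun c hc hcε => ⟨fun i j hij hna ⟨hi, hj, _⟩ => ?_, fun i j hadj h => ?_⟩⟩
    · simp only [util, deg_addE_left hij hna, deg_addE_right hij hna] at hi hj
      push_cast at hi hj
      exact hadd i j hij hna ⟨by linarith, by linarith⟩
    · have hi := hloss (i, j) hadj
      have hj := hloss (j, i) hadj.symm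
      simp only [delE_comm (i := j)] at hj
      simp only [ImprovingDel, util, ← deg_delE_left hadj, ← deg_delE_right hadj] at h
      push_cast at h
      rcases h with h | h <;> dsimp only at hi hj <;> linarith

end Stability

lemma card_subtype_eq_card_and_add_card_and_not {α : Type*} [Finite α] (P Q : α → Prop) :
    Nat.card {x // P x} = Nat.card {x // P x ∧ Q x} + Nat.card {x // P x ∧ ¬ Q x} :=
  (Set.ncard_inter_add_ncard_sdiff_eq_ncard {x | P x} {x | Q x} (Set.toFinite _)).symm

section ShortestPaths

variable {V : Type*} {g : SimpleGraph V} {y z i : V}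

instance [Finite V] (g : SimpleGraph V) (y z : V) : Finite (g.Path y z) := by
  cases nonempty_fintype V
  classical
  infer_instance

lemma sigmaAll_eq_zero (h : ¬ g.Reachable y z) : sigmaAll g y z = 0 :=
  Nat.card_eq_zero.2 (Or.inl ⟨fun p => h p.1.1.reachable⟩)

lemma sigmaAll_pos [Finite V] (h : g.Reachable y z) : 0 < sigmaAll g y z := by
  obtain ⟨p, hp, hl⟩ := h.exists_path_of_dist
  exact Nat.card_pos_iff.2 ⟨⟨⟨⟨p, hp⟩, hl⟩⟩, inferInstance⟩

lemma sigmaAll_eq_sigmaThr_add [Finite V] (i : V) :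
    sigmaAll g y z = sigmaThr g y z i +
      Nat.card {p : g.Path y z // p.1.length = g.dist y z ∧ i ∉ p.1.support} :=
  card_subtype_eq_card_and_add_card_and_not _ _

lemma sigmaThr_le_sigmaAll [Finite V] : sigmaThr g y z i ≤ sigmaAll g y z :=
  (sigmaAll_eq_sigmaThr_add i).symm ▸ Nat.le_add_right _ _

lemma sigmaThr_lt_sigmaAll [Finite V] {p : g.Walk y z} (hp : p.length = g.dist y z)
    (hi : i ∉ p.support) : sigmaThr g y z i < sigmaAll g y z := by
  rw [sigmaAll_eq_sigmaThr_add i, Nat.lt_add_right_iff_pos, Nat.card_pos_iff]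
  exact ⟨⟨⟨⟨p, p.isPath_of_length_eq_dist hp⟩, hp, hi⟩⟩, inferInstance⟩

lemma sigmaThr_pos [Finite V] {p : g.Walk y z} (hp : p.length = g.dist y z)
    (hi : i ∈ p.support) : 0 < sigmaThr g y z i :=
  Nat.card_pos_iff.2 ⟨⟨⟨⟨p, p.isPath_of_length_eq_dist hp⟩, hp, hi⟩⟩, inferInstance⟩

lemma sigmaThr_eq_sigmaAll (h : ∀ p : g.Walk y z, p.length = g.dist y z → i ∈ p.support) :
    sigmaThr g y z i = sigmaAll g y z :=
  Nat.card_congr (Equiv.subtypeEquivRight fun p => and_iff_left_of_imp (h p.1))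

lemma sigmaThr_eq_zero
    (h : ∀ p : g.Walk y z, p.IsPath → p.length = g.dist y z → i ∉ p.support) :
    sigmaThr g y z i = 0 :=
  Nat.card_eq_zero.2 (Or.inl ⟨fun p => h p.1.1 p.1.2 p.2.1 p.2.2⟩)

noncomputable def pairDependency (g : SimpleGraph V) (y z i : V) : ℝ :=
  (sigmaThr g y z i : ℝ) / sigmaAll g y z

lemma pairDependency_nonneg : 0 ≤ pairDependency g y z i := by
  unfold pairDependency
  positivity

lemma pairDependency_le_one [Finite V] : pairDependency g y z i ≤ 1 :=
  div_le_one_of_le₀ (Nat.cast_le.2 sigmaThr_le_sigmaAll) (Nat.cast_nonneg _)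

lemma pairDependency_of_not_reachable (h : ¬ g.Reachable y z) : pairDependency g y z i = 0 := by
  simp [pairDependency, sigmaAll_eq_zero h]

lemma pairDependency_eq_zero
    (h : ∀ p : g.Walk y z, p.IsPath → p.length = g.dist y z → i ∉ p.support) :
    pairDependency g y z i = 0 := by
  simp [pairDependency, sigmaThr_eq_zero h]

lemma pairDependency_eq_one [Finite V] (hr : g.Reachable y z)
    (h : ∀ p : g.Walk y z, p.length = g.dist y z → i ∈ p.support) :
    pairDependency g y z i = 1 := by
  rw [pairDependency, sigmaThr_eq_sigmaAll h, div_self (Nat.cast_ne_zero.2 (sigmaAll_pos hr).ne')]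

lemma pairDependency_pos [Finite V] {p : g.Walk y z} (hp : p.length = g.dist y z)
    (hi : i ∈ p.support) : 0 < pairDependency g y z i :=
  div_pos (Nat.cast_pos.2 (sigmaThr_pos hp hi)) (Nat.cast_pos.2 (sigmaAll_pos p.reachable))

lemma pairDependency_lt_one [Finite V] {p : g.Walk y z} (hp : p.length = g.dist y z)
    (hi : i ∉ p.support) : pairDependency g y z i < 1 :=
  (div_lt_one (Nat.cast_pos.2 (sigmaAll_pos p.reachable))).2
    (Nat.cast_lt.2 (sigmaThr_lt_sigmaAll hp hi))

lemma pairDependency_of_dist_le_one (hd : g.dist y z ≤ 1) (hy : i ≠ y) (hz : i ≠ z) :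
    pairDependency g y z i = 0 :=
  pairDependency_eq_zero fun p _ hp => p.notMem_support_of_length_le_one (hp ▸ hd) hy hz

lemma pairDependency_of_dist_eq_two (hd : g.dist y z = 2) (hn : ¬ g.Adj y i) (hy : i ≠ y)
    (hz : i ≠ z) : pairDependency g y z i = 0 := by
  refine pairDependency_eq_zero fun p _ hp hi => ?_
  obtain ⟨m, h₁, h₂, rfl⟩ := p.exists_eq_cons_cons_nil (hp.trans hd)
  simp only [Walk.support_cons, Walk.support_nil, List.mem_cons, List.not_mem_nil, or_false]
    at hi
  rcases hi with rfl | rfl | rfl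
  exacts [hy rfl, hn h₁, hz rfl]

lemma pairDependency_pos_of_adj_of_adj [Finite V] (hyz : y ≠ z) (hn : ¬ g.Adj y z)
    (h₁ : g.Adj y i) (h₂ : g.Adj i z) : 0 < pairDependency g y z i :=
  pairDependency_pos (p := .cons h₁ (.cons h₂ .nil))
    (by simpa using (dist_eq_two_iff.2 ⟨hyz, hn, i, h₁, h₂⟩).symm) (by simp)

lemma two_le_deg_of_mem_support [Finite V] {p : g.Walk y z} (hp : p.IsPath)
    (hi : i ∈ p.support) (hy : i ≠ y) (hz : i ≠ z) : 2 ≤ deg g i := by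
  obtain ⟨a, b, hab, ha, hb⟩ := hp.exists_ne_adj_adj hi hy hz
  rw [deg, Nat.card_coe_set_eq]
  exact (Set.one_lt_ncard_iff (Set.toFinite _)).2 ⟨a, b, ha, hb, hab⟩

lemma pairDependency_of_deg_le_one [Finite V] (h : deg g i ≤ 1) (hy : i ≠ y) (hz : i ≠ z) :
    pairDependency g y z i = 0 :=
  pairDependency_eq_zero fun _ hp _ hi => by
    have := two_le_deg_of_mem_support hp hi hy hz
    omega

end ShortestPaths

section Betweenness

variable {V : Type*} [Fintype V] {g h : SimpleGraph V} {i : V}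

lemma btw_le_btw
    (hle : ∀ y z, y ≠ z → y ≠ i → z ≠ i → pairDependency g y z i ≤ pairDependency h y z i) :
    btw g i ≤ btw h i := by
  unfold _root_.btw
  gcongr with y _ z _
  split_ifs with hyz
  exacts [hle y z hyz.1 hyz.2.1 hyz.2.2, le_rfl]

lemma btw_lt_btw
    (hle : ∀ y z, y ≠ z → y ≠ i → z ≠ i → pairDependency g y z i ≤ pairDependency h y z i)
    {y z : V} (hyz : y ≠ z) (hy : y ≠ i) (hz : z ≠ i)
    (hlt : pairDependency g y z i < pairDependency h y z i) : btw g i < btw h i := by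
  unfold _root_.btw
  refine mul_lt_mul_of_pos_left ?_ (by norm_num)
  refine Finset.sum_lt_sum (fun y _ => Finset.sum_le_sum fun z _ => ?_)
    ⟨y, Finset.mem_univ _, Finset.sum_lt_sum (fun z _ => ?_) ⟨z, Finset.mem_univ _, ?_⟩⟩
  · split_ifs with hc
    exacts [hle _ _ hc.1 hc.2.1 hc.2.2, le_rfl]
  · split_ifs with hc
    exacts [hle _ _ hc.1 hc.2.1 hc.2.2, le_rfl]
  · rw [if_pos ⟨hyz, hy, hz⟩, if_pos ⟨hyz, hy, hz⟩]
    exact hlt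

lemma btw_congr
    (heq : ∀ y z, y ≠ z → y ≠ i → z ≠ i → pairDependency g y z i = pairDependency h y z i) :
    btw g i = btw h i :=
  le_antisymm (btw_le_btw fun y z hyz hy hz => (heq y z hyz hy hz).le)
    (btw_le_btw fun y z hyz hy hz => (heq y z hyz hy hz).ge)

lemma btw_nonneg : 0 ≤ btw g i := by
  unfold _root_.btw
  refine mul_nonneg (by norm_num) (Finset.sum_nonneg fun y _ => Finset.sum_nonneg fun z _ => ?_)
  split_ifs
  exacts [pairDependency_nonneg, le_rfl]

lemma btw_eq_zero (h : ∀ y z, y ≠ z → y ≠ i → z ≠ i → pairDependency g y z i = 0) :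
    btw g i = 0 := by
  unfold _root_.btw
  refine mul_eq_zero_of_right _ (Finset.sum_eq_zero fun y _ => Finset.sum_eq_zero fun z _ => ?_)
  split_ifs with hyz
  exacts [h y z hyz.1 hyz.2.1 hyz.2.2, rfl]

lemma btw_of_deg_le_one (h : deg g i ≤ 1) : btw g i = 0 :=
  btw_eq_zero fun _ _ _ hy hz => pairDependency_of_deg_le_one h hy.symm hz.symm

end Betweenness

section AddEdge

variable {V : Type*} {g : SimpleGraph V} {i j y z : V}

lemma mem_edgeSet_of_mem_edges_addE {p : (addE g i j).Walk y z} (hp : s(i, j) ∉ p.edges)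
    {e : Sym2 V} (he : e ∈ p.edges) : e ∈ g.edgeSet := by
  have := p.edges_subset_edgeSet he
  simp only [addE, edgeSet_sup, edgeSet_fromEdgeSet, Set.mem_union, Set.mem_sdiff,
    Set.mem_singleton_iff] at this
  exact this.resolve_right fun h => hp (h.1 ▸ he)

def pathsAvoidingEquiv (hna : ¬ g.Adj i j) (y z : V) :
    {p : (addE g i j).Path y z // s(i, j) ∉ p.1.edges} ≃ g.Path y z where
  toFun p := ⟨p.1.1.transfer g fun _ => mem_edgeSet_of_mem_edges_addE p.2, p.1.2.transfer _⟩
  invFun q := ⟨⟨q.1.transfer _ fun _ he => edgeSet_mono le_addE (q.1.edges_subset_edgeSet he),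
    q.2.transfer _⟩, by
      rw [Walk.edges_transfer]
      exact fun h => hna (q.1.edges_subset_edgeSet h)⟩
  left_inv p := Subtype.ext <| Subtype.ext <| by simp [Walk.transfer_transfer, Walk.transfer_self]
  right_inv q := Subtype.ext <| by simp [Walk.transfer_transfer, Walk.transfer_self]

lemma card_paths_addE_avoiding (hna : ¬ g.Adj i j) (P : ℕ → List V → Prop) :
    Nat.card {p : (addE g i j).Path y z // s(i, j) ∉ p.1.edges ∧ P p.1.length p.1.support} =
      Nat.card {q : g.Path y z // P q.1.length q.1.support} :=
  Nat.card_congr <| (Equiv.subtypeSubtypeEquivSubtypeInter _ _).symm.trans <|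
    Equiv.subtypeEquiv (pathsAvoidingEquiv hna y z) fun p => by simp [pathsAvoidingEquiv]

lemma reachable_addE_iff (hr : g.Reachable i j) :
    (addE g i j).Reachable y z ↔ g.Reachable y z := by
  refine ⟨fun h => ?_, fun h => h.mono le_addE⟩
  obtain ⟨p⟩ := h
  induction p with
  | nil => exact .refl _
  | cons hadj _ ih =>
    refine .trans ?_ ih
    rcases addE_adj_iff.1 hadj with h | ⟨he, -⟩
    · exact h.reachable
    · rcases Sym2.eq_iff.1 he with ⟨rfl, rfl⟩ | ⟨rfl, rfl⟩
      exacts [hr, hr.symm]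

lemma dist_addE_eq_of_notMem_edges {p : (addE g i j).Walk y z}
    (hp : p.length = (addE g i j).dist y z) (he : s(i, j) ∉ p.edges) :
    (addE g i j).dist y z = g.dist y z := by
  let q := p.transfer g fun _ => mem_edgeSet_of_mem_edges_addE he
  have hq : g.dist y z ≤ (addE g i j).dist y z := hp ▸ p.length_transfer _ ▸ dist_le q
  exact le_antisymm (q.reachable.dist_anti le_addE) hq

noncomputable def sigmaEdge (g : SimpleGraph V) (y z : V) (e : Sym2 V) : ℕ :=
  Nat.card {p : g.Path y z // p.1.length = g.dist y z ∧ e ∈ p.1.edges}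

variable [Finite V]

lemma sigmaAll_addE (hna : ¬ g.Adj i j) (hd : (addE g i j).dist y z = g.dist y z) :
    sigmaAll (addE g i j) y z = sigmaAll g y z + sigmaEdge (addE g i j) y z s(i, j) := by
  rw [sigmaAll, card_subtype_eq_card_and_add_card_and_not _ fun p => s(i, j) ∈ p.1.edges,
    add_comm, sigmaAll, ← card_paths_addE_avoiding hna fun n _ => n = g.dist y z]
  congr 1
  exact Nat.card_congr (Equiv.subtypeEquivRight fun _ => by rw [hd, and_comm])

lemma sigmaThr_addE (hna : ¬ g.Adj i j) (hd : (addE g i j).dist y z = g.dist y z) :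
    sigmaThr (addE g i j) y z i = sigmaThr g y z i + sigmaEdge (addE g i j) y z s(i, j) := by
  rw [sigmaThr, card_subtype_eq_card_and_add_card_and_not _ fun p => s(i, j) ∈ p.1.edges,
    add_comm, sigmaThr, ← card_paths_addE_avoiding hna fun n l => n = g.dist y z ∧ i ∈ l]
  congr 1
  · exact Nat.card_congr (Equiv.subtypeEquivRight fun _ => by rw [hd, and_comm])
  · exact Nat.card_congr (Equiv.subtypeEquivRight fun p =>
      ⟨fun h => ⟨h.1.1, h.2⟩, fun h => ⟨⟨h.1, p.1.fst_mem_support_of_mem_edges h.2⟩, h.2⟩⟩)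

lemma pairDependency_le_addE (hna : ¬ g.Adj i j) :
    pairDependency g y z i ≤ pairDependency (addE g i j) y z i := by
  by_cases hr : g.Reachable y z
  · by_cases hav : ∃ p : (addE g i j).Walk y z,
        p.length = (addE g i j).dist y z ∧ s(i, j) ∉ p.edges
    · obtain ⟨p, hp, he⟩ := hav
      have hd := dist_addE_eq_of_notMem_edges hp he
      have hpos : (0 : ℝ) < sigmaAll g y z := Nat.cast_pos.2 (sigmaAll_pos hr)
      have hle : (sigmaThr g y z i : ℝ) ≤ sigmaAll g y z := Nat.cast_le.2 sigmaThr_le_sigmaAll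
      have hE : (0 : ℝ) ≤ sigmaEdge (addE g i j) y z s(i, j) := Nat.cast_nonneg _
      -- `a / b ≤ (a + e) / (b + e)`, where `e` counts the new geodesics, all through `i`
      rw [pairDependency, pairDependency, sigmaAll_addE hna hd, sigmaThr_addE hna hd,
        Nat.cast_add, Nat.cast_add, div_le_div_iff₀ hpos (by positivity)]
      nlinarith
    · push Not at hav
      rw [pairDependency_eq_one (hr.mono le_addE) fun p hp =>
        p.fst_mem_support_of_mem_edges (hav p hp)]
      exact pairDependency_le_one
  · rw [pairDependency_of_not_reachable hr]
    exact pairDependency_nonneg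

lemma pairDependency_addE (hna : ¬ g.Adj i j)
    (hno : ∀ p : (addE g i j).Walk y z, p.length = (addE g i j).dist y z → s(i, j) ∉ p.edges) :
    pairDependency (addE g i j) y z i = pairDependency g y z i := by
  by_cases hr : (addE g i j).Reachable y z
  · obtain ⟨p, hp⟩ := hr.exists_walk_length_eq_dist
    have hd := dist_addE_eq_of_notMem_edges hp (hno p hp)
    have hE : sigmaEdge (addE g i j) y z s(i, j) = 0 :=
      Nat.card_eq_zero.2 (Or.inl ⟨fun p => hno p.1.1 p.2.1 p.2.2⟩)
    rw [pairDependency, pairDependency, sigmaAll_addE hna hd, sigmaThr_addE hna hd, hE]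
    rfl
  · rw [pairDependency_of_not_reachable hr,
      pairDependency_of_not_reachable fun h => hr (h.mono le_addE)]

lemma pairDependency_delE_le (hadj : g.Adj i j) :
    pairDependency (delE g i j) y z i ≤ pairDependency g y z i := by
  simpa only [addE_delE hadj] using pairDependency_le_addE (g := delE g i j) (y := y) (z := z) not_delE_adj

lemma pairDependency_delE (hadj : g.Adj i j)
    (hno : ∀ p : g.Walk y z, p.length = g.dist y z → s(i, j) ∉ p.edges) :
    pairDependency (delE g i j) y z i = pairDependency g y z i := by
  have := pairDependency_addE (g := delE g i j) (y := y) (z := z) not_delE_adj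
  rw [addE_delE hadj] at this
  exact (this hno).symm

end AddEdge

section Moves

variable {V : Type*} {g : SimpleGraph V} {i j k k' m : V}

lemma delE_adj_of_ne {a b : V} (h : g.Adj a b) (hi : b ≠ i) (hj : b ≠ j) :
    (delE g i j).Adj a b := by
  refine delE_adj_iff.2 ⟨h, fun he => ?_⟩
  rcases Sym2.eq_iff.1 he with ⟨-, rfl⟩ | ⟨-, rfl⟩
  exacts [hj rfl, hi rfl]

lemma notMem_edges_of_dominated (hadj : g.Adj i j) (hdom : ∀ k, g.Adj i k → k ≠ j → g.Adj j k)
    {y z : V} (hd : g.dist y z ≤ 2) (hy : i ≠ y) (hz : i ≠ z) {p : g.Walk y z}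
    (hp : p.length = g.dist y z) : s(i, j) ∉ p.edges := by
  intro he
  have hi := p.fst_mem_support_of_mem_edges he
  have hj := p.snd_mem_support_of_mem_edges he
  have h2 : p.length = 2 := by
    by_contra h
    exact p.notMem_support_of_length_le_one (by omega) hy hz hi
  obtain ⟨hyz, hn, -⟩ := dist_eq_two_iff.1 (hp.symm.trans h2)
  obtain ⟨m, h₁, h₂, rfl⟩ := p.exists_eq_cons_cons_nil h2
  simp only [Walk.support_cons, Walk.support_nil, List.mem_cons, List.not_mem_nil, or_false]
    at hi hj
  obtain rfl : m = i := by
    rcases hi with rfl | rfl | rfl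
    exacts [(hy rfl).elim, rfl, (hz rfl).elim]
  rcases hj with rfl | rfl | rfl
  exacts [hn (hdom z h₂ hyz.symm), hadj.ne rfl, hn (hdom y h₁.symm hyz).symm]

variable [Fintype V]

lemma btw_lt_btw_addE (hna : ¬ g.Adj i j) {y z : V} (hyz : y ≠ z) (hy : y ≠ i) (hz : z ≠ i)
    (hlt : pairDependency g y z i < pairDependency (addE g i j) y z i) :
    btw g i < btw (addE g i j) i :=
  btw_lt_btw (fun _ _ _ _ _ => pairDependency_le_addE hna) hyz hy hz hlt

lemma btw_delE_lt_btw (hadj : g.Adj i j) {y z : V} (hyz : y ≠ z) (hy : y ≠ i) (hz : z ≠ i)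
    (hlt : pairDependency (delE g i j) y z i < pairDependency g y z i) :
    btw (delE g i j) i < btw g i :=
  btw_lt_btw (fun _ _ _ _ _ => pairDependency_delE_le hadj) hyz hy hz hlt

lemma btw_lt_btw_addE_of_not_reachable (hr : ¬ g.Reachable i j) (hik : g.Adj i k) :
    btw g i < btw (addE g i j) i := by
  have hij : i ≠ j := fun h => hr (h ▸ .refl _)
  have hrkj : ¬ g.Reachable k j := fun h => hr (hik.reachable.trans h)
  have hkj : k ≠ j := by
    rintro rfl
    exact hrkj (.refl _)
  refine btw_lt_btw_addE (fun h => hr h.reachable) hkj hik.ne' hij.symm ?_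
  rw [pairDependency_of_not_reachable hrkj, pairDependency_eq_one]
  · exact one_pos
  · exact (le_addE hik.symm).reachable.trans (addE_adj hij).reachable
  · refine fun p _ => p.fst_mem_support_of_mem_edges (u := j) (by_contra fun he => hrkj ?_)
    exact (p.transfer g fun _ => mem_edgeSet_of_mem_edges_addE he).reachable

lemma btw_lt_btw_addE_of_dist_eq_two (hij : i ≠ j) (hna : ¬ g.Adj i j) (hik : g.Adj i k)
    (hjk : g.dist j k = 2) : btw g i < btw (addE g i j) i := by
  obtain ⟨hjk', hnjk, -⟩ := dist_eq_two_iff.1 hjk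
  refine btw_lt_btw_addE hna hjk' hij.symm hik.ne' ?_
  rw [pairDependency_of_dist_eq_two hjk (mt Adj.symm hna) hij hik.ne]
  refine pairDependency_pos_of_adj_of_adj hjk' (fun h => ?_) (addE_adj hij).symm (le_addE hik)
  rcases addE_adj_iff.1 h with h | ⟨he, -⟩
  · exact hnjk h
  · rcases Sym2.eq_iff.1 he with ⟨rfl, -⟩ | ⟨-, rfl⟩
    exacts [hij rfl, hik.ne rfl]

lemma btw_delE_of_dominated (hadj : g.Adj i j) (hdom : ∀ k, g.Adj i k → k ≠ j → g.Adj j k)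
    (hdiam : ∀ y z, g.Reachable y z → g.dist y z ≤ 2) : btw (delE g i j) i = btw g i :=
  btw_congr fun y z _ hy hz => pairDependency_delE hadj fun p hp =>
    notMem_edges_of_dominated hadj hdom (hdiam y z p.reachable) hy.symm hz.symm hp

lemma btw_addE_of_dominated (hij : i ≠ j) (hna : ¬ g.Adj i j) (hr : g.Reachable i j)
    (hdom : ∀ k, g.Adj i k → k ≠ j → g.Adj j k)
    (hdiam : ∀ y z, g.Reachable y z → g.dist y z ≤ 2) : btw (addE g i j) i = btw g i := by
  have h := btw_delE_of_dominated (g := addE g i j) (addE_adj hij) (fun k hk hkj => ?_)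
    fun y z h => ?_
  · rwa [delE_addE hna, eq_comm] at h
  · rcases addE_adj_iff.1 hk with hk | ⟨he, -⟩
    · exact le_addE (hdom k hk hkj)
    · rcases Sym2.eq_iff.1 he with ⟨-, rfl⟩ | ⟨rfl, -⟩
      exacts [absurd rfl hkj, absurd rfl hij]
  · have hg := (reachable_addE_iff hr).1 h
    exact (hg.dist_anti le_addE).trans (hdiam y z hg)

lemma pairDependency_delE_lt_of_adj_of_adj (hadj : g.Adj i j) (hik : g.Adj i k) (hkj : k ≠ j)
    (hjk : ¬ g.Adj j k) (hjm : g.Adj j m) (hmk : g.Adj m k) (hmi : m ≠ i) :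
    pairDependency (delE g i j) j k i < pairDependency g j k i := by
  have hmj : m ≠ j := hjm.ne'
  have hd : (delE g i j).dist j k = 2 := dist_eq_two_iff.2 ⟨hkj.symm, fun h => hjk (delE_le h),
    m, delE_adj_of_ne hjm hmi hmj, (delE_adj_of_ne hmk.symm hmi hmj).symm⟩
  rw [pairDependency_of_dist_eq_two hd (fun h => not_delE_adj h.symm) hadj.ne hik.ne]
  exact pairDependency_pos_of_adj_of_adj hkj.symm hjk hadj.symm hik

lemma pairDependency_delE_lt_of_forall (hadj : g.Adj i j) (hik : g.Adj i k) (hkj : k ≠ j)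
    (hjk : ¬ g.Adj j k) (hi : ∀ m, g.Adj j m → g.Adj m k → m = i) (hjk' : g.Adj j k')
    (hk'i : k' ≠ i) (hik' : ¬ g.Adj i k') (hd : g.dist k' k ≤ 2) :
    pairDependency (delE g i j) j k i < pairDependency g j k i := by
  have hd₁ : g.dist j k = 2 := dist_eq_two_iff.2 ⟨hkj.symm, hjk, i, hadj.symm, hik⟩
  rw [pairDependency_eq_one (hadj.symm.reachable.trans hik.reachable) fun p hp => by
    obtain ⟨m, h₁, h₂, rfl⟩ := p.exists_eq_cons_cons_nil (hp.trans hd₁)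
    simp [hi m h₁ h₂]]
  -- in `delE g i j` the geodesic `j k' m k` avoids `i`
  have hk'k : k' ≠ k := fun h => hjk (h ▸ hjk')
  have hr : g.Reachable k' k := hjk'.symm.reachable.trans (hadj.symm.reachable.trans hik.reachable)
  have := hr.one_lt_dist_of_ne_of_not_adj hk'k fun h => hk'i (hi k' hjk' h)
  obtain ⟨-, -, m, hk'm, hmk⟩ := dist_eq_two_iff.1 (show g.dist k' k = 2 by omega)
  have hmi : m ≠ i := fun h => hik' (h ▸ hk'm).symm
  have hmj : m ≠ j := fun h => hjk (h ▸ hmk)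
  let P : (delE g i j).Walk j k := .cons (delE_adj_of_ne hjk' hk'i hjk'.ne')
    (.cons (delE_adj_of_ne hk'm hmi hmj) (.cons (delE_adj_of_ne hmk.symm hmi hmj).symm .nil))
  have hd₂ : (delE g i j).dist j k = 3 := by
    have h₁ := P.reachable.one_lt_dist_of_ne_of_not_adj hkj.symm fun h => hjk (delE_le h)
    have h₂ : (delE g i j).dist j k ≠ 2 := fun h => by
      obtain ⟨-, -, x, hjx, hxk⟩ := dist_eq_two_iff.1 h
      exact not_delE_adj (hi x (delE_le hjx) (delE_le hxk) ▸ hjx).symm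
    have h₃ := dist_le P
    simp only [P, Walk.length_cons, Walk.length_nil] at h₃
    omega
  refine pairDependency_lt_one (p := P) (by simp [P, hd₂]) ?_
  simp only [P, Walk.support_cons, Walk.support_nil, List.mem_cons, List.not_mem_nil, or_false]
  rintro (rfl | rfl | rfl | rfl)
  exacts [hadj.ne rfl, hk'i rfl, hmi rfl, hik.ne rfl]

lemma btw_delE_lt_btw_of_not_dominated (hadj : g.Adj i j) (hik : g.Adj i k) (hkj : k ≠ j)
    (hjk : ¬ g.Adj j k) (hjk' : g.Adj j k') (hk'i : k' ≠ i) (hik' : ¬ g.Adj i k')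
    (hdiam : ∀ y z, g.Reachable y z → g.dist y z ≤ 2) : btw (delE g i j) i < btw g i := by
  refine btw_delE_lt_btw hadj hkj.symm hadj.ne' hik.ne' ?_
  by_cases h : ∃ m, g.Adj j m ∧ g.Adj m k ∧ m ≠ i
  · obtain ⟨m, hjm, hmk, hmi⟩ := h
    exact pairDependency_delE_lt_of_adj_of_adj hadj hik hkj hjk hjm hmk hmi
  · push Not at h
    exact pairDependency_delE_lt_of_forall hadj hik hkj hjk h hjk' hk'i hik' (hdiam k' k
      (hjk'.symm.reachable.trans (hadj.symm.reachable.trans hik.reachable)))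

end Moves

section Characterization

variable {V : Type*} [Fintype V] {g : SimpleGraph V} {i j : V}

lemma btw_addE_of_isolated (hij : i ≠ j) (hna : ¬ g.Adj i j) (hi : ∀ k, ¬ g.Adj i k) :
    btw (addE g i j) i = btw g i := by
  have h₀ : deg g i = 0 := Nat.card_eq_zero.2 (Or.inl ⟨fun k => hi k k.2⟩)
  rw [btw_of_deg_le_one (by rw [deg_addE_left hij hna, h₀]), btw_of_deg_le_one (by omega)]

lemma reachable_of_limitAddStable (h : LimitAddStable (fun v h => btw h v) g) {k l : V}
    (hij : g.Adj i j) (hkl : g.Adj k l) : g.Reachable i k := by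
  by_contra hr
  refine h i k (fun h' => hr (h' ▸ .refl _)) (fun h' => hr h'.reachable)
    ⟨btw_lt_btw_addE_of_not_reachable hr hij, ?_⟩
  rw [addE_comm]
  exact btw_lt_btw_addE_of_not_reachable (mt Reachable.symm hr) hkl

lemma dist_le_two_of_limitAddStable (h : LimitAddStable (fun v h => btw h v) g) (i j : V) :
    g.dist i j ≤ 2 := by
  by_contra hd
  obtain ⟨a, b, hab⟩ := exists_dist_eq_three (g := g) (u := i) (v := j) (by omega)
  have hba : g.dist b a = 2 + 1 := by rw [SimpleGraph.dist_comm, hab]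
  obtain ⟨k, hak, hkb⟩ := exists_adj_dist_eq_of_dist_eq_add_one (n := 2) hab
  obtain ⟨k', hbk', hk'a⟩ := exists_adj_dist_eq_of_dist_eq_add_one hba
  have hne : a ≠ b := by
    rintro rfl
    simp at hab
  have hna : ¬ g.Adj a b := fun h => by simp [dist_eq_one_iff_adj.2 h] at hab
  refine h a b hne hna ⟨btw_lt_btw_addE_of_dist_eq_two hne hna hak (SimpleGraph.dist_comm.trans hkb), ?_⟩
  rw [addE_comm]
  exact btw_lt_btw_addE_of_dist_eq_two hne.symm (mt Adj.symm hna) hbk' (SimpleGraph.dist_comm.trans hk'a)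

lemma dist_eq_two_of_limitAddStable (h : LimitAddStable (fun v h => btw h v) g) {k l : V}
    (hij : g.Adj i j) (hkl : g.Adj k l) (hik : i ≠ k) (hn : ¬ g.Adj i k) : g.dist i k = 2 :=
  le_antisymm (dist_le_two_of_limitAddStable h i k)
    ((reachable_of_limitAddStable h hij hkl).one_lt_dist_of_ne_of_not_adj hik hn)

lemma two_le_deg_of_limitDelStable (h : LimitDelStable (fun v h => btw h v) g)
    (hij : g.Adj i j) : 2 ≤ deg g i := by
  by_contra hd
  have hlt : btw (delE g i j) i < btw g i := h i j hij
  rw [btw_of_deg_le_one (g := g) (by omega)] at hlt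
  exact hlt.not_ge btw_nonneg

lemma exists_dist_eq_two_of_limitStable (hadd : LimitAddStable (fun v h => btw h v) g)
    (hdel : LimitDelStable (fun v h => btw h v) g) (hij : g.Adj i j) :
    ∃ y z, g.Reachable y z ∧ g.dist y z = 2 := by
  by_contra hno
  push Not at hno
  have hd : ∀ y z, g.dist y z ≤ 1 := fun y z => by
    by_cases hr : g.Reachable y z
    · have := dist_le_two_of_limitAddStable hadd y z
      have := hno y z hr
      omega
    · simp [dist_eq_zero_of_not_reachable hr]
  have hlt : btw (delE g i j) i < btw g i := hdel i j hij
  rw [btw_eq_zero (g := g) fun y z _ hy hz => pairDependency_of_dist_le_one (hd y z) hy.symm hz.symm]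
    at hlt
  exact hlt.not_ge btw_nonneg

lemma adj_iff_of_limitStable (hadd : LimitAddStable (fun v h => btw h v) g)
    (hdel : LimitDelStable (fun v h => btw h v) g) (hij : i ≠ j) (hi : ∃ k, g.Adj i k)
    (hj : ∃ k, g.Adj j k) :
    g.Adj i j ↔ ¬ (g.neighborSet i \ {j} ⊆ g.neighborSet j \ {i}) ∧
      ¬ (g.neighborSet j \ {i} ⊆ g.neighborSet i \ {j}) := by
  have hdiam : ∀ y z, g.Reachable y z → g.dist y z ≤ 2 :=
    fun y z _ => dist_le_two_of_limitAddStable hadd y z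
  rw [neighborSet_diff_subset_iff, neighborSet_diff_subset_iff]
  constructor
  · intro hadj
    refine ⟨fun hdom => ?_, fun hdom => ?_⟩
    · have hlt : btw (delE g i j) i < btw g i := hdel i j hadj
      exact hlt.ne (btw_delE_of_dominated hadj hdom hdiam)
    · have hlt : btw (delE g j i) j < btw g j := hdel j i hadj.symm
      exact hlt.ne (btw_delE_of_dominated hadj.symm hdom hdiam)
  · rintro ⟨hi', hj'⟩
    push Not at hi' hj'
    obtain ⟨k, hik, hkj, hjk⟩ := hi'
    obtain ⟨k', hjk', hk'i, hik'⟩ := hj'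
    obtain ⟨a, hia⟩ := hi
    obtain ⟨b, hjb⟩ := hj
    by_contra hna
    refine hadd i j hij hna ⟨btw_lt_btw_addE_of_dist_eq_two hij hna hik
      (dist_eq_two_of_limitAddStable hadd hjb hik.symm hkj.symm hjk), ?_⟩
    rw [addE_comm]
    exact btw_lt_btw_addE_of_dist_eq_two hij.symm (mt Adj.symm hna) hjk'
      (dist_eq_two_of_limitAddStable hadd hia hjk'.symm hk'i.symm hik')

lemma limitAddStable_btw (hconn : ∀ i j k l : V, g.Adj i j → g.Adj k l → g.Reachable i k)
    (hdiam : ∀ i j : V, g.Reachable i j → g.dist i j ≤ 2)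
    (hadj : ∀ i j : V, i ≠ j → (∃ k, g.Adj i k) → (∃ k, g.Adj j k) →
      (g.Adj i j ↔ ¬ (g.neighborSet i \ {j} ⊆ g.neighborSet j \ {i}) ∧
        ¬ (g.neighborSet j \ {i} ⊆ g.neighborSet i \ {j}))) :
    LimitAddStable (fun v h => btw h v) g := by
  intro i j hij hna ⟨hi, hj⟩
  rw [addE_comm] at hj
  by_cases hi' : ∃ k, g.Adj i k
  swap
  · push Not at hi'
    exact hi.ne' (btw_addE_of_isolated hij hna hi')
  by_cases hj' : ∃ k, g.Adj j k
  swap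
  · push Not at hj'
    exact hj.ne' (btw_addE_of_isolated hij.symm (mt Adj.symm hna) hj')
  have hr : g.Reachable i j := hconn i _ j _ hi'.choose_spec hj'.choose_spec
  have hdom := mt (hadj i j hij hi' hj').2 hna
  rw [not_and_or, not_not, not_not, neighborSet_diff_subset_iff,
    neighborSet_diff_subset_iff] at hdom
  rcases hdom with hdom | hdom
  · exact hi.ne' (btw_addE_of_dominated hij hna hr hdom hdiam)
  · exact hj.ne' (btw_addE_of_dominated hij.symm (mt Adj.symm hna) hr.symm hdom hdiam)

lemma limitDelStable_btw (hdiam : ∀ i j : V, g.Reachable i j → g.dist i j ≤ 2)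
    (hadj : ∀ i j : V, i ≠ j → (∃ k, g.Adj i k) → (∃ k, g.Adj j k) →
      (g.Adj i j ↔ ¬ (g.neighborSet i \ {j} ⊆ g.neighborSet j \ {i}) ∧
        ¬ (g.neighborSet j \ {i} ⊆ g.neighborSet i \ {j}))) :
    LimitDelStable (fun v h => btw h v) g := by
  intro i j hij
  obtain ⟨hi, hj⟩ := (hadj i j hij.ne ⟨j, hij⟩ ⟨i, hij.symm⟩).1 hij
  rw [neighborSet_diff_subset_iff] at hi hj
  push Not at hi hj
  obtain ⟨k, hik, hkj, hjk⟩ := hi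
  obtain ⟨k', hjk', hk'i, hik'⟩ := hj
  exact btw_delE_lt_btw_of_not_dominated hij hik hkj hjk hjk' hk'i hik' hdiam

end Characterization

theorem statement_9 {V : Type*} [Fintype V] (g : SimpleGraph V) :
    APSN (fun v h => btw h v) g ↔
      -- at most one connected component with at least two vertices
      ((∀ i j k l : V, g.Adj i j → g.Adj k l → g.Reachable i k) ∧
       -- every vertex of that component has degree at least 2
       (∀ i : V, (∃ j, g.Adj i j) → 2 ≤ deg g i) ∧
       -- the component has diameter exactly 2
       (∀ i j : V, g.Reachable i j → g.dist i j ≤ 2) ∧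
       ((∃ i j : V, g.Adj i j) → ∃ i j : V, g.Reachable i j ∧ g.dist i j = 2) ∧
       -- edges are exactly the pairs where neither vertex dominates the other
       (∀ i j : V, i ≠ j → (∃ k, g.Adj i k) → (∃ k, g.Adj j k) →
         (g.Adj i j ↔
           ¬ (g.neighborSet i \ {j} ⊆ g.neighborSet j \ {i}) ∧
           ¬ (g.neighborSet j \ {i} ⊆ g.neighborSet i \ {j})))) := by
  rw [apsn_iff]
  constructor
  · rintro ⟨hadd, hdel⟩
    exact ⟨fun _ _ _ _ => reachable_of_limitAddStable hadd,
      fun _ ⟨_, h⟩ => two_le_deg_of_limitDelStable hdel h,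
      fun i j _ => dist_le_two_of_limitAddStable hadd i j,
      fun ⟨_, _, h⟩ => exists_dist_eq_two_of_limitStable hadd hdel h,
      fun _ _ => adj_iff_of_limitStable hadd hdel⟩
  · rintro ⟨hconn, -, hdiam, -, hadj⟩
    exact ⟨limitAddStable_btw hconn hdiam hadj, limitDelStable_btw hdiam hadj⟩
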